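/- Let ℬ be locally finitely presentable and B an object. The coslice generator 𝒢_B is closed under retracts in B↓ℬ: if l : B → C is a retract in B↓ℬ of an object of 𝒢_B, then l itself belongs to 𝒢_B. -/

import Mathlib

open CategoryTheory Limits Opposite

universe w v u

section Defs

variable {𝒞 : Type u} [Category.{v} 𝒞]

/-- An object `K` is finitely presented if `Hom(K, -)` preserves filtered colimits. -/
def IsFinPres (K : 𝒞) : Prop :=
  ∀ (J : Type v) (_ : SmallCategory J) (_ : IsFiltered J),
    Nonempty (PreservesColimitsOfShape J (coyoneda.obj (op K)))

/-- A category is locally finitely presentable if it is cocomplete and admits an essentially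
small family of finitely presented objects such that every object is a filtered colimit of
objects of this family. -/
class IsLFP (𝒞 : Type u) [Category.{v} 𝒞] extends HasColimits 𝒞 : Prop where
  exists_gen : ∃ S : Set 𝒞, Small.{v} S ∧ (∀ K ∈ S, IsFinPres K) ∧
    ∀ X : 𝒞, ∃ (J : Type v) (_ : SmallCategory J) (_ : IsFiltered J)
      (D : J ⥤ 𝒞) (c : Cocone D) (_ : Nonempty (IsColimit c)),
      c.pt = X ∧ ∀ j, D.obj j ∈ S

/-- `l : X ⟶ Y` belongs to the coslice generator `𝒢_X`: it is a pushout of a morphism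
between finitely presented objects along a map into `X`. -/
def InGen {X Y : 𝒞} (l : X ⟶ Y) : Prop :=
  ∃ (K K' : 𝒞) (_ : IsFinPres K) (_ : IsFinPres K') (k : K ⟶ K') (a : K ⟶ X)
    (c : K' ⟶ Y), IsPushout a k l c

end Defs

/-!
Write `B` as a filtered colimit of finitely presented objects `D j`. The square presenting `Y`
descends to a stage: `Y = B ⊔_{D j₀} P` with `P` finitely presented, so `Y` is the filtered
colimit of the finitely presented objects `D j ⊔_{D j₀} P`. The retract `X` splits the idempotent
`e = r ≫ s`, so it is the coequalizer of `e` and `𝟙`; since `e` fixes `B` and the legs of a pushout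
are jointly epic, it is also the coequalizer of `κ ≫ e` and `κ` for the leg `κ : P ⟶ Y`. As `P` is
finitely presented, `κ ≫ e` factors through some stage `D j ⊔_{D j₀} P`, and because coequalizers
commute with pushouts, `X` is the pushout along `D j ⟶ B` of a coequalizer of finitely presented
objects.
-/

section CosliceGenerator

variable {C : Type u} [Category.{v} C]

lemma isFinPres_iff_isFinitelyPresentable (K : C) :
    IsFinPres K ↔ IsFinitelyPresentable.{v} K := by
  rw [isFinitelyPresentable_iff_preservesFilteredColimits]
  exact ⟨fun h => ⟨fun J _ _ => (h J _ ‹_›).some⟩, fun _ J _ _ => ⟨inferInstance⟩⟩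

attribute [local instance] Cardinal.fact_isRegular_aleph0 in
lemma isFinPres_of_isColimit {I : Type w} [SmallCategory I] [FinCategory I] {F : I ⥤ C}
    {c : Cocone F} (hc : IsColimit c) (hF : ∀ i, IsFinPres (F.obj i)) : IsFinPres c.pt := by
  simp only [isFinPres_iff_isFinitelyPresentable] at hF ⊢
  exact isCardinalPresentable_of_isColimit' c hc _
    (by rw [hasCardinalLT_aleph0_iff]; infer_instance)

lemma isFinPres_pushout [HasPushouts C] {A P Q : C} (f : A ⟶ P) (g : A ⟶ Q) (hA : IsFinPres A)
    (hP : IsFinPres P) (hQ : IsFinPres Q) : IsFinPres (pushout f g) :=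
  isFinPres_of_isColimit (colimit.isColimit (span f g)) (by rintro (_ | _ | _) <;> assumption)

lemma isFinPres_coequalizer [HasCoequalizers C] {P Q : C} (u v : P ⟶ Q) (hP : IsFinPres P)
    (hQ : IsFinPres Q) : IsFinPres (coequalizer u v) :=
  isFinPres_of_isColimit (colimit.isColimit (parallelPair u v)) (by rintro (_ | _) <;> assumption)

lemma InGen.exists_isPushout_of_isColimit [HasPushouts C] {J : Type v} [SmallCategory J]
    [IsFiltered J] {D : J ⥤ C} {c : Cocone D} (hc : IsColimit c) (hD : ∀ j, IsFinPres (D.obj j))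
    {Y : C} {l : c.pt ⟶ Y} (hl : InGen l) :
    ∃ (j : J) (P : C) (g : D.obj j ⟶ P) (κ : P ⟶ Y), IsFinPres P ∧ IsPushout (c.ι.app j) g l κ := by
  obtain ⟨K, K', hK, hK', k, a, κ, h⟩ := hl
  have := (isFinPres_iff_isFinitelyPresentable K).1 hK
  obtain ⟨j, f, rfl⟩ := IsFinitelyPresentable.exists_hom_of_isColimit hc a
  exact ⟨j, _, _, _, isFinPres_pushout f k hK (hD j) hK', h.of_left' (.of_hasPushout f k)⟩

attribute [local instance] IsFiltered.isConnected in
lemma CategoryTheory.IsPushout.exists_stage_lift [HasPushouts C] {J : Type v} [SmallCategory J]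
    [IsFiltered J] {D : J ⥤ C} {c : Cocone D} (hc : IsColimit c) {j₀ : J} {P Y : C}
    {g : D.obj j₀ ⟶ P} {l : c.pt ⟶ Y} {κ : P ⟶ Y} (h : IsPushout (c.ι.app j₀) g l κ) {T : C} (hT : IsFinPres T)
    (φ : T ⟶ Y) :
    ∃ (j : J) (t : j₀ ⟶ j) (ψ : T ⟶ pushout (D.map t) g) (κ' : pushout (D.map t) g ⟶ Y),
      IsPushout (c.ι.app j) (pushout.inl _ _) l κ' ∧ pushout.inr _ _ ≫ κ' = κ ∧ ψ ≫ κ' = φ := by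
  have := (isFinPres_iff_isFinitelyPresentable T).1 hT
  -- `Under.pushout g` is a left adjoint and `Under.forget P` preserves connected colimits.
  have : PreservesColimitsOfSize.{v, v} (Under.pushout g) :=
    (Under.mapPushoutAdj g).leftAdjoint_preservesColimits
  have hc' := isColimitOfPreserves (Under.pushout g ⋙ Under.forget P) (hc.underPost j₀)
  obtain ⟨j, ψ, hψ⟩ : ∃ (j : Under j₀) (ψ : T ⟶ pushout (D.map j.hom) g),
      ψ ≫ (Under.pushout g ⋙ Under.forget P).map ((c.underPost j₀).ι.app j) =
        φ ≫ h.isoPushout.hom :=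
    IsFinitelyPresentable.exists_hom_of_isColimit hc' _
  have h' : IsPushout (D.map j.hom ≫ c.ι.app j.right) g l κ := by rwa [c.w]
  refine ⟨j.right, j.hom, ψ, _, h'.of_left' (.of_hasPushout _ _), IsPushout.inr_desc _ _ _ _, ?_⟩
  rw [← cancel_mono h.isoPushout.hom, ← hψ, Category.assoc]
  congr 1
  ext
  · simp only [IsPushout.inl_desc_assoc, Category.assoc, IsPushout.inl_isoPushout_hom,
      Cocone.underPost_ι_app]
    exact (pushout.inl_desc _ _ _).symm
  · simp only [IsPushout.inr_desc_assoc, IsPushout.inr_isoPushout_hom, Cocone.underPost_ι_app]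
    exact (pushout.inr_desc _ _ _).symm

lemma isPushout_coequalizer_π_of_isColimit {P Y Z T : C} {κ : P ⟶ Y} {u v : T ⟶ P}
    [HasCoequalizer u v] {φ₁ φ₂ : T ⟶ Y} (hu : u ≫ κ = φ₁) (hv : v ≫ κ = φ₂) {m : Y ⟶ Z}
    {w : φ₁ ≫ m = φ₂ ≫ m} (hm : IsColimit (Cofork.ofπ m w)) :
    IsPushout κ (coequalizer.π u v) m
      (coequalizer.desc (κ ≫ m) (by rw [reassoc_of% hu, reassoc_of% hv, w])) := by
  subst hu hv
  have : Epi m := epi_of_isColimit_cofork hm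
  let desc (σ : PushoutCocone κ (coequalizer.π u v)) : Z ⟶ σ.pt :=
    Cofork.IsColimit.desc hm σ.inl
      (by rw [Category.assoc, Category.assoc, σ.condition, coequalizer.condition_assoc])
  have m_desc (σ) : m ≫ desc σ = σ.inl := Cofork.IsColimit.π_desc' hm _ _
  refine .of_isColimit' ⟨(coequalizer.π_desc _ _).symm⟩
    (PushoutCocone.IsColimit.mk _ desc m_desc (fun σ => ?_) (fun σ d hd _ => ?_))
  · apply coequalizer.hom_ext
    rw [coequalizer.π_desc_assoc, Category.assoc, m_desc, σ.condition]
  · rw [← cancel_epi m, hd, m_desc]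

def isColimitCoforkOfRetraction {B : C} {X Y : Under B} (s : X ⟶ Y) (r : Y ⟶ X)
    (hrs : s ≫ r = 𝟙 X) {A P : C} {i : A ⟶ B} {g : A ⟶ P} {κ : P ⟶ Y.right}
    (h : IsPushout i g Y.hom κ) :
    IsColimit (Cofork.ofπ (f := κ ≫ r.right ≫ s.right) (g := κ) r.right
      (by rw [Category.assoc, Category.assoc, ← Under.comp_right, hrs, Under.id_right,
        Category.comp_id])) := by
  have hsr : s.right ≫ r.right = 𝟙 X.right := by rw [← Under.comp_right, hrs, Under.id_right]
  refine Cofork.IsColimit.mk _ (fun σ => s.right ≫ σ.π) (fun σ => ?_) (fun σ m hm => ?_)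
  · exact h.hom_ext (by simp [reassoc_of% Under.w r, reassoc_of% Under.w s])
      (by simpa using σ.condition)
  · calc m = s.right ≫ r.right ≫ m := by rw [reassoc_of% hsr]
      _ = s.right ≫ σ.π := congrArg _ hm

end CosliceGenerator

/-- The coslice generator `𝒢_B` is closed under retracts in `B↓ℬ`. -/
theorem stmt10 {ℬ : Type u} [Category.{v} ℬ] [IsLFP ℬ] {B : ℬ}
    (X Y : Under B) (s : X ⟶ Y) (r : Y ⟶ X) (hrs : s ≫ r = 𝟙 X)
    (hY : InGen Y.hom) : InGen X.hom := by
  obtain ⟨S, -, hS, hpres⟩ := IsLFP.exists_gen (𝒞 := ℬ)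
  obtain ⟨J, _, _, D, cb, ⟨hcb⟩, rfl, hD⟩ := hpres B
  have hDfp (j : J) : IsFinPres (D.obj j) := hS _ (hD j)
  obtain ⟨j₀, P, g, κ, hP, hpo⟩ := hY.exists_isPushout_of_isColimit hcb hDfp
  obtain ⟨j, t, ψ, κ', hpo', hinr, hψ⟩ := hpo.exists_stage_lift hcb hP (κ ≫ r.right ≫ s.right)
  have hX := hpo'.paste_vert <|
    isPushout_coequalizer_π_of_isColimit hψ hinr (isColimitCoforkOfRetraction s r hrs hpo)
  rw [Under.w r] at hX
  exact ⟨_, _, hDfp j, isFinPres_coequalizer _ _ hP (isFinPres_pushout _ _ (hDfp j₀) (hDfp j) hP),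
    _, _, _, hX⟩
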